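/- Let f_t, f_1, …, f_d ∈ L^∞(0,1; L^1(𝕋^d)), extended by 0 for t ≤ 0, and suppose that ∫_0^1 ∫_{𝕋^d} ( f_t ∂_t ξ + Σ_{j=1}^d f_j ∂_j ξ ) dx dt = 0 for every ξ ∈ C_c^∞([0,1)×𝕋^d) (null boundary condition). Define F_j(t,x) := −∫_0^t f_j(s,x) ds for t > 0 and F_j(t,x) := 0 for t ≤ 0. Then for all τ, ξ^1, …, ξ^d ∈ C_c^∞([0,1)×𝕋^d) one has ∫_0^1 ∫_{𝕋^d} ( f_t τ + Σ_{j=1}^d f_j ξ^j ) dx dt = ∫_0^1 ∫_{𝕋^d} Σ_{j=1}^d F_j ( ∂_t ξ^j − ∂_j τ ) dx dt. (In the language of currents: the normal 1-current T = f_t e_t + f_j e_j with ∂T = 0 in (−∞,1)×𝕋^d is the boundary of the 2-current S = Σ_j F_j e_t ∧ e_j.) -/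

import Mathlib

open MeasureTheory Filter Topology
open scoped ENNReal NNReal

noncomputable section

set_option synthInstance.maxHeartbeats 1000000
set_option maxHeartbeats 1000000
set_option linter.unusedSectionVars false
set_option linter.unusedVariables false

open intervalIntegral Set

section PrimitiveSmoothness

variable {H : Type} [NormedAddCommGroup H] [NormedSpace ℝ H] [FiniteDimensional ℝ H]
variable {E : Type} [NormedAddCommGroup E] [NormedSpace ℝ E] [CompleteSpace E]

/-- The primitive in the second (time) variable. -/
def primI (F : H × ℝ → E) : H × ℝ → E := fun p => ∫ s in (0:ℝ)..p.2, F (p.1, s)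

/-- partial derivative in the first variable, as a CLM. -/
def pdFst (F : H × ℝ → E) (q : H × ℝ) : H →L[ℝ] E :=
  (fderiv ℝ F q).comp (ContinuousLinearMap.inl ℝ H ℝ)

def primD (F : H × ℝ → E) (p : H × ℝ) : (H × ℝ) →L[ℝ] E :=
  ((∫ s in (0:ℝ)..p.2, pdFst F (p.1, s)).comp (ContinuousLinearMap.fst ℝ H ℝ)) +
    (ContinuousLinearMap.snd ℝ H ℝ).smulRight (F p)

theorem contDiff_top' {F : H × ℝ → E} (hF : ContDiff ℝ (⊤:ℕ∞) F) :
    ContDiff ℝ ((⊤:ℕ∞) : WithTop ℕ∞) F := hF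

theorem hasFDerivAt_pc (F : H × ℝ → E) (hF : ContDiff ℝ (⊤:ℕ∞) F) (q : H × ℝ) :
    HasFDerivAt (fun x : H => F (x, q.2)) (pdFst F q) q.1 :=
  ((hF.differentiable (by simp)) (q.1,q.2)).hasFDerivAt.comp q.1
    (hasFDerivAt_prodMk_left q.1 q.2)

theorem continuous_pdFst (F : H × ℝ → E) (hF : ContDiff ℝ (⊤:ℕ∞) F) :
    Continuous (pdFst F) := by
  have h1 : ContDiff ℝ ((⊤:ℕ∞) : WithTop ℕ∞) (fderiv ℝ F) :=
    hF.fderiv_right (by exact_mod_cast le_top)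
  exact (((ContinuousLinearMap.compL ℝ H (H × ℝ) E).flip
    (ContinuousLinearMap.inl ℝ H ℝ)).continuous).comp h1.continuous

theorem hasFDerivAt_primI (F : H × ℝ → E) (hF : ContDiff ℝ (⊤:ℕ∞) F) (p₀ : H × ℝ) :
    HasFDerivAt (primI F) (primD F p₀) p₀ := by
  obtain ⟨x₀, t₀⟩ := p₀
  have hFc : Continuous F := hF.continuous
  have hpdc : Continuous (pdFst F) := continuous_pdFst F hF
  -- compact set and bound
  set K : Set (H × ℝ) := Metric.closedBall x₀ 1 ×ˢ Icc (-(|t₀|+1)) (|t₀|+1) with hK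
  have hKc : IsCompact K := (isCompact_closedBall x₀ 1).prod isCompact_Icc
  obtain ⟨M, hM⟩ := hKc.exists_bound_of_continuousOn hpdc.continuousOn
  have hIsub : ∀ {u : ℝ}, |u - t₀| ≤ 1 → Set.uIoc t₀ u ⊆ Icc (-(|t₀|+1)) (|t₀|+1) := by
    intro u hu s hs
    rcases abs_le.1 hu with ⟨h1, h2⟩
    constructor
    · have := hs.1
      have : min t₀ u ≤ s := le_of_lt hs.1
      have hminge : -(|t₀|+1) ≤ min t₀ u := by
        apply le_min
        · linarith [neg_abs_le t₀]
        · linarith [neg_abs_le t₀]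
      linarith
    · have : s ≤ max t₀ u := hs.2
      have : max t₀ u ≤ |t₀| + 1 := by
        apply max_le
        · linarith [le_abs_self t₀]
        · linarith [le_abs_self t₀]
      linarith
  have hI0sub : Set.uIoc 0 t₀ ⊆ Icc (-(|t₀|+1)) (|t₀|+1) := by
    intro s hs
    constructor
    · have hminge : -(|t₀|+1) ≤ min 0 t₀ := by
        apply le_min <;> linarith [neg_abs_le t₀, abs_nonneg t₀]
      linarith [hs.1]
    · have : max 0 t₀ ≤ |t₀| + 1 := by
        apply max_le <;> linarith [le_abs_self t₀, abs_nonneg t₀]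
      linarith [hs.2]
  have hbnd : ∀ x ∈ Metric.closedBall x₀ 1, ∀ s ∈ Icc (-(|t₀|+1)) (|t₀|+1),
      ‖pdFst F (x, s)‖ ≤ M := fun x hx s hs => hM _ ⟨hx, hs⟩
  have hM0 : 0 ≤ M :=
    le_trans (norm_nonneg _) (hbnd x₀ (Metric.mem_closedBall_self zero_le_one) t₀
      ⟨by linarith [neg_abs_le t₀], by linarith [le_abs_self t₀]⟩)
  -- part 1
  have part1 : HasFDerivAt (fun x : H => ∫ s in (0:ℝ)..t₀, F (x, s))
      (∫ s in (0:ℝ)..t₀, pdFst F (x₀, s)) x₀ := by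
    apply intervalIntegral.hasFDerivAt_integral_of_dominated_of_fderiv_le
      (F' := fun x s => pdFst F (x, s)) (bound := fun _ => M) (Metric.ball_mem_nhds x₀ one_pos)
    · exact Eventually.of_forall fun x =>
        (hFc.comp (continuous_const.prodMk continuous_id)).aestronglyMeasurable
    · exact (hFc.comp (continuous_const.prodMk continuous_id)).intervalIntegrable _ _
    · exact (hpdc.comp (continuous_const.prodMk continuous_id)).aestronglyMeasurable
    · refine Eventually.of_forall fun s hs x hx => ?_
      exact hbnd x (Metric.ball_subset_closedBall hx) s (hI0sub hs)
    · exact intervalIntegrable_const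
    · exact Eventually.of_forall fun s _ x _ => hasFDerivAt_pc F hF (x, s)
  have part1' : HasFDerivAt (fun p : H × ℝ => ∫ s in (0:ℝ)..t₀, F (p.1, s))
      ((∫ s in (0:ℝ)..t₀, pdFst F (x₀, s)).comp (ContinuousLinearMap.fst ℝ H ℝ)) (x₀, t₀) :=
    part1.comp (f := Prod.fst) (x₀, t₀) hasFDerivAt_fst
  -- part 2
  have part2 : HasDerivAt (fun t => ∫ s in t₀..t, F (x₀, s)) (F (x₀, t₀)) t₀ := by
    apply intervalIntegral.integral_hasDerivAt_right
    · exact (hFc.comp (continuous_const.prodMk continuous_id)).intervalIntegrable _ _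
    · exact (hFc.comp (continuous_const.prodMk continuous_id)).stronglyMeasurable.stronglyMeasurableAtFilter
    · exact (hFc.comp (continuous_const.prodMk continuous_id)).continuousAt
  have part2' : HasFDerivAt (fun p : H × ℝ => ∫ s in t₀..p.2, F (x₀, s))
      ((ContinuousLinearMap.snd ℝ H ℝ).smulRight (F (x₀, t₀))) (x₀, t₀) := by
    have := part2.hasFDerivAt.comp (f := Prod.snd) (x₀, t₀) hasFDerivAt_snd
    exact this.congr_fderiv (by ext <;> simp)
  -- part 3: remainder
  set r : H × ℝ → E := fun p => ∫ s in t₀..p.2, (F (p.1, s) - F (x₀, s)) with hr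
  have part3 : HasFDerivAt r (0 : (H × ℝ) →L[ℝ] E) (x₀, t₀) := by
    rw [hasFDerivAt_iff_isLittleO_nhds_zero]
    have hr0 : r (x₀, t₀) = 0 := by simp [hr]
    rw [Asymptotics.isLittleO_iff]
    intro c hc
    have hδ : 0 < min 1 (c / (M + 1)) := lt_min one_pos (div_pos hc (by linarith))
    filter_upwards [Metric.ball_mem_nhds (0 : H × ℝ) hδ] with h hh
    rw [Metric.mem_ball, dist_zero_right] at hh
    have hh1 : ‖h‖ < 1 := lt_of_lt_of_le hh (min_le_left _ _)
    have hh2 : ‖h‖ < c / (M + 1) := lt_of_lt_of_le hh (min_le_right _ _)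
    have hx1 : ‖h.1‖ ≤ ‖h‖ := norm_fst_le h
    have ht2 : |h.2| ≤ ‖h‖ := norm_snd_le h
    have key : ∀ s ∈ Set.uIoc t₀ (t₀ + h.2), ‖F (x₀ + h.1, s) - F (x₀, s)‖ ≤ M * ‖h‖ := by
      intro s hs
      have hsK : s ∈ Icc (-(|t₀|+1)) (|t₀|+1) := hIsub (by simpa using le_trans ht2 hh1.le) hs
      have := Convex.norm_image_sub_le_of_norm_hasFDerivWithin_le
        (f := fun y : H => F (y, s)) (f' := fun y => pdFst F (y, s))
        (s := Metric.closedBall x₀ 1)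
        (fun y _ => (hasFDerivAt_pc F hF (y, s)).hasFDerivWithinAt)
        (fun y hy => hbnd y hy s hsK) (convex_closedBall x₀ 1)
        (Metric.mem_closedBall_self zero_le_one)
        (by rw [Metric.mem_closedBall, dist_eq_norm, add_sub_cancel_left]
            exact le_trans hx1 hh1.le)
      calc ‖F (x₀ + h.1, s) - F (x₀, s)‖ ≤ M * ‖x₀ + h.1 - x₀‖ := this
        _ = M * ‖h.1‖ := by rw [add_sub_cancel_left]
        _ ≤ M * ‖h‖ := by nlinarith [norm_nonneg h]
    have hbig : ‖r ((x₀, t₀) + h)‖ ≤ M * ‖h‖ * ‖h‖ := by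
      have : r ((x₀, t₀) + h) = ∫ s in t₀..(t₀ + h.2), (F (x₀ + h.1, s) - F (x₀, s)) := rfl
      rw [this]
      calc ‖∫ s in t₀..(t₀ + h.2), (F (x₀ + h.1, s) - F (x₀, s))‖
          ≤ M * ‖h‖ * |t₀ + h.2 - t₀| :=
            intervalIntegral.norm_integral_le_of_norm_le_const key
        _ = M * ‖h‖ * |h.2| := by ring_nf
        _ ≤ M * ‖h‖ * ‖h‖ := by
            have := mul_le_mul_of_nonneg_left ht2 (mul_nonneg hM0 (norm_nonneg h))
            linarith
    calc ‖r ((x₀, t₀) + h) - r (x₀, t₀) - 0‖ = ‖r ((x₀, t₀) + h)‖ := by rw [hr0]; simp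
      _ ≤ M * ‖h‖ * ‖h‖ := hbig
      _ ≤ M * ‖h‖ * (c / (M+1)) := by
            exact mul_le_mul_of_nonneg_left hh2.le (mul_nonneg hM0 (norm_nonneg h))
      _ ≤ c * ‖h‖ := by
            have hpos : (0:ℝ) < M + 1 := by linarith
            rw [show M * ‖h‖ * (c / (M+1)) = (M / (M+1)) * (c * ‖h‖) by field_simp]
            exact mul_le_of_le_one_left (mul_nonneg hc.le (norm_nonneg h))
              (by rw [div_le_one hpos]; linarith)
  -- decomposition
  have hdecomp : primI F = fun p : H × ℝ =>
      (∫ s in (0:ℝ)..t₀, F (p.1, s)) + ((∫ s in t₀..p.2, F (x₀, s)) + r p) := by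
    funext p
    have i1 : IntervalIntegrable (fun s => F (p.1, s)) volume 0 t₀ :=
      (hFc.comp (continuous_const.prodMk continuous_id)).intervalIntegrable _ _
    have i2 : IntervalIntegrable (fun s => F (p.1, s)) volume t₀ p.2 :=
      (hFc.comp (continuous_const.prodMk continuous_id)).intervalIntegrable _ _
    have i3 : IntervalIntegrable (fun s => F (x₀, s)) volume t₀ p.2 :=
      (hFc.comp (continuous_const.prodMk continuous_id)).intervalIntegrable _ _
    have e1 : primI F p = (∫ s in (0:ℝ)..t₀, F (p.1, s)) + ∫ s in t₀..p.2, F (p.1, s) :=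
      (intervalIntegral.integral_add_adjacent_intervals i1 i2).symm
    rw [e1, hr]
    congr 1
    rw [← intervalIntegral.integral_add i3 (i2.sub i3)]
    congr 1
    funext s
    abel
  rw [hdecomp]
  have := (part1'.add (part2'.add part3))
  exact this.congr_fderiv (by simp [primD])

theorem contDiff_primI (n : ℕ) :
    ∀ {E' : Type} [NormedAddCommGroup E'] [NormedSpace ℝ E'] [CompleteSpace E']
      (F : H × ℝ → E'), ContDiff ℝ (⊤:ℕ∞) F → ContDiff ℝ (n : WithTop ℕ∞) (primI F) := by
  induction n with
  | zero =>
    intro E' _ _ _ F hF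
    rw [show ((0:ℕ) : WithTop ℕ∞) = 0 from rfl, contDiff_zero]
    exact intervalIntegral.continuous_parametric_primitive_of_continuous
      (f := fun (x : H) (t : ℝ) => F (x, t)) hF.continuous
  | succ n ih =>
    intro E' _ _ _ F hF
    have hdiff : Differentiable ℝ (primI F) := fun p => (hasFDerivAt_primI F hF p).differentiableAt
    have hfd : fderiv ℝ (primI F) = fun p => primD F p :=
      funext fun p => (hasFDerivAt_primI F hF p).fderiv
    rw [show ((n+1:ℕ) : WithTop ℕ∞) = (n : WithTop ℕ∞) + 1 by exact_mod_cast rfl,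
      contDiff_succ_iff_fderiv]
    refine ⟨hdiff, by simp, ?_⟩
    rw [hfd]
    have hG : ContDiff ℝ (⊤:ℕ∞) (fun q : H × ℝ => pdFst F q) :=
      (((ContinuousLinearMap.compL ℝ H (H × ℝ) E').flip
        (ContinuousLinearMap.inl ℝ H ℝ)).contDiff).comp
        (hF.fderiv_right (by exact_mod_cast le_top))
    have h1 : ContDiff ℝ (n : WithTop ℕ∞) (primI (fun q => pdFst F q)) := ih _ hG
    have h1' : ContDiff ℝ (n : WithTop ℕ∞)
        (fun p : H × ℝ => ((primI (pdFst F)) p).comp (ContinuousLinearMap.fst ℝ H ℝ)) :=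
      (((ContinuousLinearMap.compL ℝ (H × ℝ) H E').flip
        (ContinuousLinearMap.fst ℝ H ℝ)).contDiff).comp h1
    have h2 : ContDiff ℝ (n : WithTop ℕ∞)
        (fun p : H × ℝ => (ContinuousLinearMap.snd ℝ H ℝ).smulRight (F p)) :=
      ((ContinuousLinearMap.smulRightL ℝ (H × ℝ) E'
        (ContinuousLinearMap.snd ℝ H ℝ)).contDiff).comp (hF.of_le (by exact_mod_cast le_top))
    exact h1'.add h2

theorem contDiff_primI_top (F : H × ℝ → E) (hF : ContDiff ℝ (⊤:ℕ∞) F) :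
    ContDiff ℝ (⊤:ℕ∞) (primI F) := by
  rw [contDiff_infty]
  exact fun n => contDiff_primI n F hF

/-! ### slice derivative helpers -/

section Slice
variable {X : Type} [NormedAddCommGroup X] [NormedSpace ℝ X] [FiniteDimensional ℝ X]

theorem hasDerivAt_slice_fst {Φ : ℝ × X → ℝ} (hΦ : Differentiable ℝ Φ) (t : ℝ) (x : X) :
    HasDerivAt (fun s => Φ (s, x)) (fderiv ℝ Φ (t, x) (1, 0)) t := by
  have h := ((hΦ (t, x)).hasFDerivAt.comp t (hasFDerivAt_prodMk_left t x)).hasDerivAt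
  simp at h; exact h

theorem hasFDerivAt_slice_snd {Φ : ℝ × X → ℝ} (hΦ : Differentiable ℝ Φ) (t : ℝ) (x : X) :
    HasFDerivAt (fun y => Φ (t, y))
      ((fderiv ℝ Φ (t, x)).comp (ContinuousLinearMap.inr ℝ ℝ X)) x :=
  (hΦ (t, x)).hasFDerivAt.comp x (hasFDerivAt_prodMk_right t x)

/-- parametric interval integral in a finite-dimensional parameter: derivative under the
integral sign (fixed endpoints). -/
theorem hasFDerivAt_param_integral {ξ : ℝ → X → ℝ}
    (hsm : ContDiff ℝ (⊤:ℕ∞) (fun z : ℝ × X => ξ z.1 z.2)) (a b : ℝ) (x₀ : X) :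
    HasFDerivAt (fun y : X => ∫ s in a..b, ξ s y)
      (∫ s in a..b,
        (fderiv ℝ (fun z : ℝ × X => ξ z.1 z.2) (s, x₀)).comp (ContinuousLinearMap.inr ℝ ℝ X))
      x₀ := by
  set Φ : ℝ × X → ℝ := fun z => ξ z.1 z.2 with hΦdef
  have hΦ : Continuous Φ := hsm.continuous
  have hdiff : Differentiable ℝ Φ := hsm.differentiable (by simp)
  set G : X × ℝ → (X →L[ℝ] ℝ) :=
    fun q => (fderiv ℝ Φ (q.2, q.1)).comp (ContinuousLinearMap.inr ℝ ℝ X) with hGdef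
  have hGc : Continuous G := by
    have h0 : ContDiff ℝ ((⊤:ℕ∞) : WithTop ℕ∞) (fderiv ℝ Φ) :=
      hsm.fderiv_right (by exact_mod_cast le_top)
    have h1 : Continuous (fderiv ℝ Φ) := h0.continuous
    exact (((ContinuousLinearMap.compL ℝ X (ℝ × X) ℝ).flip
      (ContinuousLinearMap.inr ℝ ℝ X)).continuous).comp (h1.comp (continuous_snd.prodMk continuous_fst))
  set K : Set (X × ℝ) := Metric.closedBall x₀ 1 ×ˢ Icc (a ⊓ b) (a ⊔ b) with hK
  have hKc : IsCompact K := (isCompact_closedBall x₀ 1).prod isCompact_Icc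
  obtain ⟨M, hM⟩ := hKc.exists_bound_of_continuousOn hGc.continuousOn
  have key := intervalIntegral.hasFDerivAt_integral_of_dominated_of_fderiv_le
    (𝕜 := ℝ) (μ := volume) (F := fun (y : X) (s : ℝ) => ξ s y)
    (F' := fun (y : X) (s : ℝ) => G (y, s)) (bound := fun _ => M) (a := a) (b := b)
    (x₀ := x₀) (Metric.ball_mem_nhds x₀ one_pos)
    (Eventually.of_forall fun y =>
      ((hΦ.comp (continuous_id.prodMk continuous_const)).aestronglyMeasurable))
    ((hΦ.comp (continuous_id.prodMk continuous_const)).intervalIntegrable _ _)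
    ((hGc.comp (continuous_const.prodMk continuous_id)).aestronglyMeasurable)
    (Eventually.of_forall fun s hs y hy =>
      hM (y, s) ⟨Metric.ball_subset_closedBall hy, Ioc_subset_Icc_self hs⟩)
    intervalIntegrable_const
    (Eventually.of_forall fun s _ y _ => hasFDerivAt_slice_snd hdiff s y)
  exact key

theorem intervalIntegrable_G {ξ : ℝ → X → ℝ}
    (hsm : ContDiff ℝ (⊤:ℕ∞) (fun z : ℝ × X => ξ z.1 z.2)) (a b : ℝ) (x₀ : X) :
    IntervalIntegrable (fun s =>
      (fderiv ℝ (fun z : ℝ × X => ξ z.1 z.2) (s, x₀)).comp (ContinuousLinearMap.inr ℝ ℝ X))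
      volume a b := by
  have h0 : ContDiff ℝ ((⊤:ℕ∞) : WithTop ℕ∞) (fderiv ℝ (fun z : ℝ × X => ξ z.1 z.2)) :=
    hsm.fderiv_right (by exact_mod_cast le_top)
  have h1 : Continuous (fderiv ℝ (fun z : ℝ × X => ξ z.1 z.2)) := h0.continuous
  exact ((((ContinuousLinearMap.compL ℝ X (ℝ × X) ℝ).flip
    (ContinuousLinearMap.inr ℝ ℝ X)).continuous).comp
      (h1.comp (continuous_id.prodMk continuous_const))).intervalIntegrable _ _

end Slice



end PrimitiveSmoothness


/-- A fundamental domain for the torus `𝕋^d = ℝ^d/ℤ^d`, viewed inside `ℝ^d`. -/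
def Td (d : ℕ) : Set (Fin d → ℝ) := Set.univ.pi fun _ => Set.Ico (0:ℝ) 1

/-- Lebesgue measure on the torus `𝕋^d`, i.e. Lebesgue measure on `ℝ^d`
restricted to a fundamental domain. -/
def μT (d : ℕ) : Measure (Fin d → ℝ) := volume.restrict (Td d)

/-- The product measure on `(0,1) × 𝕋^d`. -/
def μST (d : ℕ) : Measure (ℝ × (Fin d → ℝ)) :=
  (volume.restrict (Set.Ioo (0:ℝ) 1)).prod (μT d)

/-- `ℤ^d`-periodicity: functions on `𝕋^d` are identified with `ℤ^d`-periodic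
functions on `ℝ^d`. -/
def ZPer {d : ℕ} {E : Type*} (f : (Fin d → ℝ) → E) : Prop :=
  ∀ (x : Fin d → ℝ) (k : Fin d → ℤ), f (x + fun i => (k i : ℝ)) = f x

/-- The partial derivative `∂_j f (x)` in the `j`-th space direction. -/
def pd {d : ℕ} (j : Fin d) (f : (Fin d → ℝ) → ℝ) (x : Fin d → ℝ) : ℝ :=
  fderiv ℝ f x (Pi.single j 1)

/-- Test functions `ξ ∈ C_c^∞([0,1) × 𝕋^d)`: smooth, `ℤ^d`-periodic in space, and
vanishing for `t ≥ a` for some `a < 1` (they may be nonzero at `t = 0`). -/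
def IsTest {d : ℕ} (ξ : ℝ → (Fin d → ℝ) → ℝ) : Prop :=
  ContDiff ℝ (⊤:ℕ∞) (fun z : ℝ × (Fin d → ℝ) => ξ z.1 z.2) ∧
  (∀ t, ZPer (ξ t)) ∧ ∃ a, a < 1 ∧ ∀ t x, a ≤ t → ξ t x = 0

/-! ### helpers about test functions -/

section TestHelpers
variable {d : ℕ}

theorem pd_slice {ξ : ℝ → (Fin d → ℝ) → ℝ}
    (hsm : ContDiff ℝ (⊤:ℕ∞) (fun z : ℝ × (Fin d → ℝ) => ξ z.1 z.2)) (j : Fin d)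
    (t : ℝ) (x : Fin d → ℝ) :
    pd j (ξ t) x =
      fderiv ℝ (fun z : ℝ × (Fin d → ℝ) => ξ z.1 z.2) (t, x) (0, Pi.single j 1) := by
  have h := hasFDerivAt_slice_snd (X := Fin d → ℝ)
    (hsm.differentiable (by simp)) t x
  have : pd j (ξ t) x = ((fderiv ℝ (fun z : ℝ × (Fin d → ℝ) => ξ z.1 z.2) (t, x)).comp
      (ContinuousLinearMap.inr ℝ ℝ (Fin d → ℝ))) (Pi.single j 1) := by
    rw [pd]
    congr 1
    exact h.fderiv
  rw [this]
  simp

theorem deriv_slice {ξ : ℝ → (Fin d → ℝ) → ℝ}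
    (hsm : ContDiff ℝ (⊤:ℕ∞) (fun z : ℝ × (Fin d → ℝ) => ξ z.1 z.2))
    (t : ℝ) (x : Fin d → ℝ) :
    deriv (fun s => ξ s x) t =
      fderiv ℝ (fun z : ℝ × (Fin d → ℝ) => ξ z.1 z.2) (t, x) (1, 0) :=
  (hasDerivAt_slice_fst (hsm.differentiable (by simp)) t x).deriv

theorem cont_pd_slice {ξ : ℝ → (Fin d → ℝ) → ℝ}
    (hsm : ContDiff ℝ (⊤:ℕ∞) (fun z : ℝ × (Fin d → ℝ) => ξ z.1 z.2)) (j : Fin d) :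
    Continuous (fun z : ℝ × (Fin d → ℝ) => pd j (ξ z.1) z.2) := by
  have h0 : ContDiff ℝ ((⊤:ℕ∞) : WithTop ℕ∞)
      (fderiv ℝ (fun z : ℝ × (Fin d → ℝ) => ξ z.1 z.2)) :=
    hsm.fderiv_right (by exact_mod_cast le_top)
  have : Continuous (fun z : ℝ × (Fin d → ℝ) =>
      fderiv ℝ (fun z : ℝ × (Fin d → ℝ) => ξ z.1 z.2) z ((0:ℝ), Pi.single j 1)) :=
    (ContinuousLinearMap.apply ℝ ℝ ((0:ℝ), Pi.single j 1)).continuous.comp h0.continuous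
  refine this.congr fun z => ?_
  rw [pd_slice hsm]

theorem cont_deriv_slice {ξ : ℝ → (Fin d → ℝ) → ℝ}
    (hsm : ContDiff ℝ (⊤:ℕ∞) (fun z : ℝ × (Fin d → ℝ) => ξ z.1 z.2)) :
    Continuous (fun z : ℝ × (Fin d → ℝ) => deriv (fun s => ξ s z.2) z.1) := by
  have h0 : ContDiff ℝ ((⊤:ℕ∞) : WithTop ℕ∞)
      (fderiv ℝ (fun z : ℝ × (Fin d → ℝ) => ξ z.1 z.2)) :=
    hsm.fderiv_right (by exact_mod_cast le_top)
  have : Continuous (fun z : ℝ × (Fin d → ℝ) =>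
      fderiv ℝ (fun z : ℝ × (Fin d → ℝ) => ξ z.1 z.2) z ((1:ℝ), (0 : Fin d → ℝ))) :=
    (ContinuousLinearMap.apply ℝ ℝ ((1:ℝ), (0 : Fin d → ℝ))).continuous.comp h0.continuous
  refine this.congr fun z => ?_
  rw [deriv_slice hsm]

theorem ZPer.pd_per {f : (Fin d → ℝ) → ℝ} (hper : ZPer f) (hdiff : Differentiable ℝ f)
    (j : Fin d) : ZPer (pd j f) := by
  intro x k
  have hfun : (fun y => f (y + fun i => (k i : ℝ))) = f := funext fun y => hper y k
  have h1 : HasFDerivAt (fun y : Fin d → ℝ => y + fun i => (k i : ℝ))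
      (ContinuousLinearMap.id ℝ (Fin d → ℝ)) x := (hasFDerivAt_id x).add_const _
  have h2 : HasFDerivAt (fun y => f (y + fun i => (k i : ℝ)))
      ((fderiv ℝ f (x + fun i => (k i : ℝ))).comp (ContinuousLinearMap.id ℝ (Fin d → ℝ))) x :=
    (hdiff _).hasFDerivAt.comp x h1
  rw [hfun] at h2
  have : fderiv ℝ f x = (fderiv ℝ f (x + fun i => (k i : ℝ))).comp
      (ContinuousLinearMap.id ℝ (Fin d → ℝ)) := h2.fderiv
  rw [pd, pd, this]
  simp

theorem ZPer.deriv_per {ξ : ℝ → (Fin d → ℝ) → ℝ} (hper : ∀ t, ZPer (ξ t)) (t : ℝ) :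
    ZPer (fun x => deriv (fun s => ξ s x) t) := by
  intro x k
  have : (fun s => ξ s (x + fun i => (k i : ℝ))) = fun s => ξ s x :=
    funext fun s => hper s x k
  simp only [this]

/-- A continuous, space-periodic function is bounded on `[0,1] × ℝ^d`. -/
theorem bound_of_periodic {φ : ℝ × (Fin d → ℝ) → ℝ} (hc : Continuous φ)
    (hper : ∀ t, ZPer (fun x => φ (t, x))) :
    ∃ M : ℝ, 0 ≤ M ∧ ∀ t ∈ Set.Icc (0:ℝ) 1, ∀ x, |φ (t, x)| ≤ M := by
  have hKc : IsCompact ((Set.Icc (0:ℝ) 1) ×ˢ (Set.univ.pi fun _ : Fin d => Set.Icc (0:ℝ) 1)) :=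
    isCompact_Icc.prod (isCompact_univ_pi fun _ => isCompact_Icc)
  obtain ⟨M, hM⟩ := hKc.exists_bound_of_continuousOn hc.continuousOn
  refine ⟨max M 0, le_max_right _ _, fun t ht x => ?_⟩
  set y : Fin d → ℝ := fun i => Int.fract (x i) with hy
  have hxy : y + (fun i => ((⌊x i⌋ : ℤ) : ℝ)) = x := funext fun i => Int.fract_add_floor (x i)
  have h1 : φ (t, x) = φ (t, y) := by
    conv_lhs => rw [← hxy]
    exact hper t y fun i => ⌊x i⌋
  rw [h1]
  have hyK : y ∈ Set.univ.pi fun _ : Fin d => Set.Icc (0:ℝ) 1 := fun i _ =>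
    ⟨Int.fract_nonneg _, (Int.fract_lt_one _).le⟩
  calc |φ (t, y)| ≤ M := hM (t, y) ⟨ht, hyK⟩
    _ ≤ max M 0 := le_max_left _ _

end TestHelpers


/-! ### measure-theoretic helpers -/

section MeasureHelpers
variable {d : ℕ}

instance : IsProbabilityMeasure (volume.restrict (Set.Ioo (0:ℝ) 1)) := by
  constructor
  rw [Measure.restrict_apply_univ, Real.volume_Ioo]
  norm_num

instance : IsProbabilityMeasure (μT d) := by
  constructor
  rw [μT, Measure.restrict_apply_univ, Td, volume_pi_pi]
  simp [Real.volume_Ico]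

instance : IsProbabilityMeasure (μST d) := by
  unfold μST; infer_instance

instance : SFinite (μST d) := by unfold μST; infer_instance

theorem ae_fst_Ioo : ∀ᵐ z ∂(μST d), z.1 ∈ Set.Ioo (0:ℝ) 1 := by
  rw [ae_iff]
  refine measure_mono_null (fun z hz => ?_) (?_ : (μST d) ((Set.Ioo (0:ℝ) 1)ᶜ ×ˢ Set.univ) = 0)
  · exact ⟨hz, Set.mem_univ _⟩
  · rw [μST, Measure.prod_prod, Measure.restrict_apply (measurableSet_Ioo.compl)]
    simp

theorem ae_snd_prop {P : (Fin d → ℝ) → Prop} (h : ∀ᵐ x ∂(μT d), P x) :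
    ∀ᵐ z ∂(μST d), P z.2 := by
  rw [ae_iff] at h ⊢
  refine measure_mono_null (fun z hz => ?_)
    (?_ : (μST d) ((Set.univ : Set ℝ) ×ˢ {x | ¬ P x}) = 0)
  · exact ⟨Set.mem_univ _, hz⟩
  · rw [μST, Measure.prod_prod, h]
    simp

/-- `L^∞ L^1` data gives integrability on the product. -/
theorem integrable_of_LinfL1 {g : ℝ → (Fin d → ℝ) → ℝ}
    (hm : AEStronglyMeasurable (fun z : ℝ × (Fin d → ℝ) => g z.1 z.2) (μST d)) {C : ℝ≥0}
    (hC : ∀ᵐ t ∂(volume.restrict (Set.Ioo (0:ℝ) 1)),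
      MemLp (g t) 1 (μT d) ∧ eLpNorm (g t) 1 (μT d) ≤ C) :
    Integrable (fun z : ℝ × (Fin d → ℝ) => g z.1 z.2) (μST d) := by
  rw [μST] at hm ⊢
  refine (integrable_prod_iff hm).2 ⟨?_, ?_⟩
  · filter_upwards [hC] with t ht
    exact memLp_one_iff_integrable.1 ht.1
  · refine Integrable.mono' (integrable_const (C:ℝ)) ?_ ?_
    · exact hm.norm.integral_prod_right'
    · filter_upwards [hC] with t ht
      have h1 : Integrable (g t) (μT d) := memLp_one_iff_integrable.1 ht.1
      have h2 : ∫ x, ‖g t x‖ ∂(μT d) = (eLpNorm (g t) 1 (μT d)).toReal := by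
        rw [eLpNorm_one_eq_lintegral_enorm,
          integral_norm_eq_lintegral_enorm h1.aestronglyMeasurable]
      have h3 : (0:ℝ) ≤ ∫ x, ‖g t x‖ ∂(μT d) := integral_nonneg fun x => norm_nonneg _
      rw [Real.norm_eq_abs, abs_of_nonneg h3, h2]
      exact ENNReal.toReal_le_of_le_ofReal (by positivity)
        (le_trans ht.2 (by simp))

/-- bounded (on the relevant window) times integrable is integrable. -/
theorem integrable_mul_bdd {g h : ℝ → (Fin d → ℝ) → ℝ}
    (hg : Integrable (fun z : ℝ × (Fin d → ℝ) => g z.1 z.2) (μST d))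
    (hh : AEStronglyMeasurable (fun z : ℝ × (Fin d → ℝ) => h z.1 z.2) (μST d)) {M : ℝ}
    (hM : ∀ t ∈ Set.Icc (0:ℝ) 1, ∀ x, |h t x| ≤ M) :
    Integrable (fun z : ℝ × (Fin d → ℝ) => g z.1 z.2 * h z.1 z.2) (μST d) := by
  refine Integrable.mono' (hg.norm.const_mul M) (hg.aestronglyMeasurable.mul hh) ?_
  filter_upwards [ae_fst_Ioo (d := d)] with z hz
  rw [Real.norm_eq_abs, abs_mul]
  have := hM z.1 ⟨hz.1.le, hz.2.le⟩ z.2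
  have h0 : 0 ≤ |g z.1 z.2| := abs_nonneg _
  rw [Real.norm_eq_abs]
  nlinarith [abs_nonneg (h z.1 z.2)]

end MeasureHelpers


/-! ### primitive measurability and the Fubini swap -/

section PrimMeas
variable {d : ℕ}

/-- indicator kernel `W (z, s) = 1_{s ≤ z.1} g s z.2`. -/
def Wfun (d : ℕ) (g : ℝ → (Fin d → ℝ) → ℝ) : ((ℝ × (Fin d → ℝ)) × ℝ) → ℝ :=
  fun w => (Set.Iic w.1.1).indicator (fun s => g s w.1.2) w.2

theorem measurePreserving_snd_μST :
    MeasurePreserving Prod.snd (μST d) (μT d) := by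
  rw [μST]
  refine ⟨measurable_snd, ?_⟩
  rw [Measure.map_snd_prod]
  simp

theorem measurePreserving_psi :
    MeasurePreserving (fun w : (ℝ × (Fin d → ℝ)) × ℝ => (w.2, w.1.2))
      ((μST d).prod (volume.restrict (Set.Ioo (0:ℝ) 1))) (μST d) := by
  have h1 : MeasurePreserving Prod.swap
      ((μST d).prod (volume.restrict (Set.Ioo (0:ℝ) 1)))
      ((volume.restrict (Set.Ioo (0:ℝ) 1)).prod (μST d)) :=
    Measure.measurePreserving_swap
  have h2 : MeasurePreserving (Prod.map (id : ℝ → ℝ) (Prod.snd : ℝ × (Fin d → ℝ) → _))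
      ((volume.restrict (Set.Ioo (0:ℝ) 1)).prod (μST d))
      ((volume.restrict (Set.Ioo (0:ℝ) 1)).prod (μT d)) :=
    (MeasurePreserving.id _).prod measurePreserving_snd_μST
  have h3 := h2.comp h1
  have heq : (Prod.map (id : ℝ → ℝ) (Prod.snd : ℝ × (Fin d → ℝ) → _)) ∘ Prod.swap
      = fun w : (ℝ × (Fin d → ℝ)) × ℝ => (w.2, w.1.2) := rfl
  rw [heq] at h3
  rw [μST]
  exact h3

theorem aesm_gpsi {g : ℝ → (Fin d → ℝ) → ℝ}
    (hg : AEStronglyMeasurable (fun z : ℝ × (Fin d → ℝ) => g z.1 z.2) (μST d)) :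
    AEStronglyMeasurable (fun w : (ℝ × (Fin d → ℝ)) × ℝ => g w.2 w.1.2)
      ((μST d).prod (volume.restrict (Set.Ioo (0:ℝ) 1))) :=
  hg.comp_quasiMeasurePreserving measurePreserving_psi.quasiMeasurePreserving

theorem aesm_Wfun {g : ℝ → (Fin d → ℝ) → ℝ}
    (hg : AEStronglyMeasurable (fun z : ℝ × (Fin d → ℝ) => g z.1 z.2) (μST d)) :
    AEStronglyMeasurable (Wfun d g) ((μST d).prod (volume.restrict (Set.Ioo (0:ℝ) 1))) := by
  have hS : MeasurableSet {w : (ℝ × (Fin d → ℝ)) × ℝ | w.2 ≤ w.1.1} :=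
    measurableSet_le measurable_snd (measurable_fst.comp measurable_fst)
  have h1 := (aesm_gpsi hg).indicator hS
  refine h1.congr (Eventually.of_forall fun w => ?_)
  by_cases hw : w.2 ≤ w.1.1
  · simp [Wfun, Set.indicator_apply, hw]
  · simp [Wfun, Set.indicator_apply, hw]

theorem integrable_Wfun {g : ℝ → (Fin d → ℝ) → ℝ}
    (hg : Integrable (fun z : ℝ × (Fin d → ℝ) => g z.1 z.2) (μST d)) :
    Integrable (Wfun d g) ((μST d).prod (volume.restrict (Set.Ioo (0:ℝ) 1))) := by
  have hcomp : Integrable (fun w : (ℝ × (Fin d → ℝ)) × ℝ => g w.2 w.1.2)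
      ((μST d).prod (volume.restrict (Set.Ioo (0:ℝ) 1))) :=
    (measurePreserving_psi.integrable_comp hg.aestronglyMeasurable).2 hg
  refine Integrable.mono' hcomp.norm (aesm_Wfun hg.aestronglyMeasurable)
    (Eventually.of_forall fun w => ?_)
  by_cases hw : w.2 ≤ w.1.1
  · simp [Wfun, Set.indicator_apply, hw]
  · simp [Wfun, Set.indicator_apply, hw]

theorem prim_ae_eq (g : ℝ → (Fin d → ℝ) → ℝ) :
    ∀ᵐ z ∂(μST d), (∫ s, Wfun d g (z, s) ∂(volume.restrict (Set.Ioo (0:ℝ) 1)))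
      = ∫ s in Set.Ioc (0:ℝ) z.1, g s z.2 := by
  filter_upwards [ae_fst_Ioo (d := d)] with z hz
  have h1 : (fun s => Wfun d g (z, s)) = (Set.Iic z.1).indicator (fun s => g s z.2) := rfl
  have hset : Set.Iic z.1 ∩ Set.Ioo 0 1 = Set.Ioc (0:ℝ) z.1 := by
    ext s
    constructor
    · rintro ⟨h2, h3, h4⟩; exact ⟨h3, h2⟩
    · rintro ⟨h2, h3⟩; exact ⟨h3, h2, lt_of_le_of_lt h3 hz.2⟩
  rw [h1, MeasureTheory.integral_indicator measurableSet_Iic,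
    Measure.restrict_restrict measurableSet_Iic, hset]

theorem aesm_prim {g : ℝ → (Fin d → ℝ) → ℝ}
    (hg : AEStronglyMeasurable (fun z : ℝ × (Fin d → ℝ) => g z.1 z.2) (μST d)) :
    AEStronglyMeasurable (fun z : ℝ × (Fin d → ℝ) =>
      ∫ s in Set.Ioc (0:ℝ) z.1, g s z.2) (μST d) :=
  ((aesm_Wfun hg).integral_prod_right').congr (prim_ae_eq g)

theorem ae_slice_int {g : ℝ → (Fin d → ℝ) → ℝ}
    (hg : Integrable (fun z : ℝ × (Fin d → ℝ) => g z.1 z.2) (μST d)) :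
    ∀ᵐ x ∂(μT d), Integrable (fun t => g t x) (volume.restrict (Set.Ioo (0:ℝ) 1)) := by
  rw [μST] at hg
  exact hg.prod_left_ae

theorem integrable_prim_mul {g h : ℝ → (Fin d → ℝ) → ℝ}
    (hg : Integrable (fun z : ℝ × (Fin d → ℝ) => g z.1 z.2) (μST d))
    (hh : AEStronglyMeasurable (fun z : ℝ × (Fin d → ℝ) => h z.1 z.2) (μST d)) {M : ℝ}
    (hM : ∀ t ∈ Set.Icc (0:ℝ) 1, ∀ x, |h t x| ≤ M) :
    Integrable (fun z : ℝ × (Fin d → ℝ) =>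
      (∫ s in Set.Ioc (0:ℝ) z.1, g s z.2) * h z.1 z.2) (μST d) := by
  have hM0 : 0 ≤ M := le_trans (abs_nonneg _) (hM 0 ⟨le_refl _, zero_le_one⟩ 0)
  -- the dominating function
  have hGn : Integrable (fun x => ∫ t, ‖g t x‖ ∂(volume.restrict (Set.Ioo (0:ℝ) 1)))
      (μT d) := by
    have := hg
    rw [μST] at this
    exact this.integral_norm_prod_right
  have hdom : Integrable (fun z : ℝ × (Fin d → ℝ) =>
      M * ∫ t, ‖g t z.2‖ ∂(volume.restrict (Set.Ioo (0:ℝ) 1))) (μST d) := by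
    have h1 : Integrable ((fun x => ∫ t, ‖g t x‖ ∂(volume.restrict (Set.Ioo (0:ℝ) 1)))
        ∘ Prod.snd) (μST d) :=
      (measurePreserving_snd_μST.integrable_comp hGn.aestronglyMeasurable).2 hGn
    exact (h1.const_mul M)
  refine Integrable.mono' hdom ((aesm_prim hg.aestronglyMeasurable).mul hh) ?_
  filter_upwards [ae_fst_Ioo (d := d), ae_snd_prop (ae_slice_int hg)] with z hz hzint
  rw [Real.norm_eq_abs, abs_mul]
  have h1 : |∫ s in Set.Ioc (0:ℝ) z.1, g s z.2| ≤
      ∫ t, ‖g t z.2‖ ∂(volume.restrict (Set.Ioo (0:ℝ) 1)) := by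
    rw [← Real.norm_eq_abs]
    refine le_trans (MeasureTheory.norm_integral_le_integral_norm _) ?_
    have h2 : (volume.restrict (Set.Ioo (0:ℝ) 1)) = volume.restrict (Set.Ioo (0:ℝ) 1) := rfl
    have h3 : Set.Ioc (0:ℝ) z.1 ⊆ Set.Ioo (0:ℝ) 1 := fun s hs =>
      ⟨hs.1, lt_of_le_of_lt hs.2 hz.2⟩
    refine setIntegral_mono_set (hzint.norm) ?_ (HasSubset.Subset.eventuallyLE h3)
    exact Eventually.of_forall fun s => norm_nonneg _
  have h2 : |h z.1 z.2| ≤ M := hM z.1 ⟨hz.1.le, hz.2.le⟩ z.2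
  calc |∫ s in Set.Ioc (0:ℝ) z.1, g s z.2| * |h z.1 z.2|
      ≤ (∫ t, ‖g t z.2‖ ∂(volume.restrict (Set.Ioo (0:ℝ) 1))) * M := by
        refine mul_le_mul h1 h2 (abs_nonneg _) ?_
        exact le_trans (abs_nonneg _) h1
    _ = M * ∫ t, ‖g t z.2‖ ∂(volume.restrict (Set.Ioo (0:ℝ) 1)) := mul_comm _ _

end PrimMeas


section Swap
variable {d : ℕ}

theorem ae_fst_prod {P : ℝ × (Fin d → ℝ) → Prop} (h : ∀ᵐ z ∂(μST d), P z) :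
    ∀ᵐ w ∂((μST d).prod (volume.restrict (Set.Ioo (0:ℝ) 1))), P w.1 := by
  rw [ae_iff] at h ⊢
  refine measure_mono_null (fun w hw => ?_)
    (?_ : ((μST d).prod (volume.restrict (Set.Ioo (0:ℝ) 1))) ({z | ¬ P z} ×ˢ Set.univ) = 0)
  · exact ⟨hw, Set.mem_univ _⟩
  · rw [Measure.prod_prod, h]
    simp

theorem Kcont {h : ℝ → (Fin d → ℝ) → ℝ}
    (hc : Continuous (fun z : ℝ × (Fin d → ℝ) => h z.1 z.2)) :
    Continuous (fun z : ℝ × (Fin d → ℝ) => ∫ u in z.1..(1:ℝ), h u z.2) := by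
  have h1 : Continuous (fun p : (Fin d → ℝ) × ℝ => ∫ u in (1:ℝ)..p.2, h u p.1) :=
    intervalIntegral.continuous_parametric_primitive_of_continuous (μ := volume)
      (f := fun (x : Fin d → ℝ) (u : ℝ) => h u x) (a₀ := 1)
      (hc.comp (continuous_snd.prodMk continuous_fst))
  have h2 := (h1.comp (continuous_snd.prodMk continuous_fst)).neg
  refine h2.congr fun z => ?_
  show -(∫ (u : ℝ) in (1:ℝ)..z.1, h u z.2) = ∫ (u : ℝ) in z.1..(1:ℝ), h u z.2
  rw [intervalIntegral.integral_symm z.1 1, neg_neg]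

theorem aesm_K {h : ℝ → (Fin d → ℝ) → ℝ}
    (hc : Continuous (fun z : ℝ × (Fin d → ℝ) => h z.1 z.2)) :
    AEStronglyMeasurable
      (fun z : ℝ × (Fin d → ℝ) => ∫ u in Set.Ioc z.1 (1:ℝ), h u z.2) (μST d) := by
  refine ((Kcont hc).aestronglyMeasurable).congr ?_
  filter_upwards [ae_fst_Ioo (d := d)] with z hz
  rw [intervalIntegral.integral_of_le hz.2.le]

theorem bound_K {h : ℝ → (Fin d → ℝ) → ℝ} {M : ℝ}
    (hM : ∀ t ∈ Set.Icc (0:ℝ) 1, ∀ x, |h t x| ≤ M) :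
    ∀ t ∈ Set.Icc (0:ℝ) 1, ∀ x, |∫ u in Set.Ioc t (1:ℝ), h u x| ≤ M := by
  have hM0 : 0 ≤ M := le_trans (abs_nonneg _) (hM 0 ⟨le_refl _, zero_le_one⟩ 0)
  intro t ht x
  rw [← intervalIntegral.integral_of_le ht.2, ← Real.norm_eq_abs]
  have hb : ∀ u ∈ Set.uIoc t 1, ‖h u x‖ ≤ M := by
    intro u hu
    have h1 : u ∈ Set.Icc (0:ℝ) 1 := by
      constructor
      · exact le_of_lt (lt_of_le_of_lt (le_min ht.1 zero_le_one) hu.1)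
      · exact le_trans hu.2 (max_le ht.2 le_rfl)
    rw [Real.norm_eq_abs]
    exact hM u h1 x
  refine le_trans (intervalIntegral.norm_integral_le_of_norm_le_const hb) ?_
  have : |1 - t| ≤ 1 := by rw [abs_le]; constructor <;> [linarith [ht.2]; linarith [ht.1]]
  nlinarith

theorem swap_lemma {g h : ℝ → (Fin d → ℝ) → ℝ}
    (hg : Integrable (fun z : ℝ × (Fin d → ℝ) => g z.1 z.2) (μST d))
    (hc : Continuous (fun z : ℝ × (Fin d → ℝ) => h z.1 z.2)) {M : ℝ}
    (hM : ∀ t ∈ Set.Icc (0:ℝ) 1, ∀ x, |h t x| ≤ M) :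
    ∫ z, (∫ s in Set.Ioc (0:ℝ) z.1, g s z.2) * h z.1 z.2 ∂(μST d)
      = ∫ z, g z.1 z.2 * (∫ s in Set.Ioc z.1 (1:ℝ), h s z.2) ∂(μST d) := by
  have hM0 : 0 ≤ M := le_trans (abs_nonneg _) (hM 0 ⟨le_refl _, zero_le_one⟩ 0)
  set ν := volume.restrict (Set.Ioo (0:ℝ) 1) with hν
  set V : ((ℝ × (Fin d → ℝ)) × ℝ) → ℝ := fun w => Wfun d g w * h w.1.1 w.1.2 with hV
  have hcomp : Integrable (fun w : (ℝ × (Fin d → ℝ)) × ℝ => g w.2 w.1.2)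
      ((μST d).prod ν) :=
    (measurePreserving_psi.integrable_comp hg.aestronglyMeasurable).2 hg
  have hVint : Integrable V ((μST d).prod ν) := by
    refine Integrable.mono' (hcomp.norm.const_mul M)
      ((aesm_Wfun hg.aestronglyMeasurable).mul
        ((hc.comp continuous_fst).aestronglyMeasurable)) ?_
    filter_upwards [ae_fst_prod (ae_fst_Ioo (d := d))] with w hw
    have h1 : |Wfun d g w| ≤ ‖g w.2 w.1.2‖ := by
      by_cases hww : w.2 ≤ w.1.1
      · simp [Wfun, Set.indicator_apply, hww, Real.norm_eq_abs]
      · simp [Wfun, Set.indicator_apply, hww, Real.norm_eq_abs, abs_nonneg]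
    have h2 : |h w.1.1 w.1.2| ≤ M := hM w.1.1 ⟨hw.1.le, hw.2.le⟩ w.1.2
    rw [hV, Real.norm_eq_abs, abs_mul]
    calc |Wfun d g w| * |h w.1.1 w.1.2| ≤ ‖g w.2 w.1.2‖ * M :=
        mul_le_mul h1 h2 (abs_nonneg _) (norm_nonneg _)
      _ = M * ‖g w.2 w.1.2‖ := mul_comm _ _
  have step1 : ∫ z, (∫ s in Set.Ioc (0:ℝ) z.1, g s z.2) * h z.1 z.2 ∂(μST d)
      = ∫ z, (∫ s, V (z, s) ∂ν) ∂(μST d) := by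
    refine integral_congr_ae ?_
    filter_upwards [prim_ae_eq g] with z hz
    rw [← hz, ← MeasureTheory.integral_mul_const]
  have step2 : ∫ z, (∫ s, V (z, s) ∂ν) ∂(μST d) = ∫ s, (∫ z, V (z, s) ∂(μST d)) ∂ν :=
    integral_integral_swap hVint
  have hslice : ∀ᵐ s ∂ν, Integrable (fun z => V (z, s)) (μST d) := hVint.prod_left_ae
  have step3 : ∀ᵐ s ∂ν, (∫ z, V (z, s) ∂(μST d))
      = ∫ x, g s x * (∫ u in Set.Ioc s (1:ℝ), h u x) ∂(μT d) := by
    filter_upwards [ae_restrict_mem measurableSet_Ioo, hslice] with s hs hsi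
    have e1 : ∫ z, V (z, s) ∂(μST d) = ∫ t, (∫ x, V ((t, x), s) ∂(μT d)) ∂ν :=
      MeasureTheory.integral_prod _ hsi
    have e2 : ∫ t, (∫ x, V ((t, x), s) ∂(μT d)) ∂ν
        = ∫ x, (∫ t, V ((t, x), s) ∂ν) ∂(μT d) :=
      integral_integral_swap hsi
    have e3 : ∀ x, (∫ t, V ((t, x), s) ∂ν) = g s x * ∫ u in Set.Ioc s (1:ℝ), h u x := by
      intro x
      have ee : (fun t => V ((t, x), s))
          = fun t => g s x * ((Set.Ici s).indicator (fun u => h u x) t) := by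
        funext t
        by_cases hst : s ≤ t
        · simp [hV, Wfun, Set.indicator_apply, hst]
        · simp [hV, Wfun, Set.indicator_apply, hst]
      rw [ee, MeasureTheory.integral_const_mul]
      congr 1
      rw [MeasureTheory.integral_indicator measurableSet_Ici,
        Measure.restrict_restrict measurableSet_Ici]
      have hset : Set.Ici s ∩ Set.Ioo (0:ℝ) 1 = Set.Ico s 1 := by
        ext u
        constructor
        · rintro ⟨h1, h2, h3⟩; exact ⟨h1, h3⟩
        · rintro ⟨h1, h2⟩; exact ⟨h1, lt_of_lt_of_le hs.1 h1, h2⟩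
      rw [hset, integral_Ico_eq_integral_Ioo, ← integral_Ioc_eq_integral_Ioo]
    rw [e1, e2]
    simp only [e3]
  have step4 : ∫ z, g z.1 z.2 * (∫ s in Set.Ioc z.1 (1:ℝ), h s z.2) ∂(μST d)
      = ∫ s, (∫ x, g s x * (∫ u in Set.Ioc s (1:ℝ), h u x) ∂(μT d)) ∂ν := by
    have hint : Integrable (fun z : ℝ × (Fin d → ℝ) =>
        g z.1 z.2 * (∫ u in Set.Ioc z.1 (1:ℝ), h u z.2)) (μST d) :=
      integrable_mul_bdd hg (aesm_K hc) (bound_K hM)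
    exact MeasureTheory.integral_prod _ hint
  rw [step1, step2, step4]
  exact integral_congr_ae step3

end Swap


/-- Let `f_t, f_1, …, f_d ∈ L^∞(0,1; L^1(𝕋^d))`, extended by `0` for
`t ≤ 0`, satisfy the null boundary condition
`∫₀^1 ∫_{𝕋^d} (f_t ∂_t ξ + Σ_j f_j ∂_j ξ) dx dt = 0` for all `ξ ∈ C_c^∞([0,1)×𝕋^d)`.
With `F_j(t,x) := −∫₀^t f_j(s,x) ds`, for all test functions `τ, ξ^1, …, ξ^d` one has
`∫₀^1 ∫_{𝕋^d} (f_t τ + Σ_j f_j ξ^j) = ∫₀^1 ∫_{𝕋^d} Σ_j F_j (∂_t ξ^j − ∂_j τ)`.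
(The current `T = f_t e_t + f_j e_j` with `∂T = 0` is the boundary of
`S = Σ_j F_j e_t ∧ e_j`.) -/
theorem null_boundary_current_is_a_boundary {d : ℕ}
    (ft : ℝ → (Fin d → ℝ) → ℝ) (f : Fin d → ℝ → (Fin d → ℝ) → ℝ)
    (hft_meas : AEStronglyMeasurable (fun z : ℝ × (Fin d → ℝ) => ft z.1 z.2) (μST d))
    (hf_meas : ∀ j, AEStronglyMeasurable (fun z : ℝ × (Fin d → ℝ) => f j z.1 z.2) (μST d))
    (hft_per : ∀ t, ZPer (ft t)) (hf_per : ∀ j t, ZPer (f j t))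
    (hft_ext : ∀ t ≤ (0:ℝ), ∀ x, ft t x = 0)
    (hf_ext : ∀ j, ∀ t ≤ (0:ℝ), ∀ x, f j t x = 0)
    -- `f_t, f_1, …, f_d ∈ L^∞(0,1; L^1(𝕋^d))`
    (hLinfL1 : ∃ C : ℝ≥0, ∀ᵐ t ∂(volume.restrict (Set.Ioo (0:ℝ) 1)),
      (MemLp (ft t) 1 (μT d) ∧ eLpNorm (ft t) 1 (μT d) ≤ C) ∧
      ∀ j, MemLp (f j t) 1 (μT d) ∧ eLpNorm (f j t) 1 (μT d) ≤ C)
    -- null boundary condition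
    (hnull : ∀ ξ : ℝ → (Fin d → ℝ) → ℝ, IsTest ξ →
      ∫ z, (ft z.1 z.2 * deriv (fun s => ξ s z.2) z.1
        + ∑ j, f j z.1 z.2 * pd j (ξ z.1) z.2) ∂(μST d) = 0) :
    ∀ τ : ℝ → (Fin d → ℝ) → ℝ, IsTest τ →
    ∀ ξ : Fin d → ℝ → (Fin d → ℝ) → ℝ, (∀ j, IsTest (ξ j)) →
      ∫ z, (ft z.1 z.2 * τ z.1 z.2 + ∑ j, f j z.1 z.2 * ξ j z.1 z.2) ∂(μST d)
        = ∫ z, ∑ j, (-(∫ s in Set.Ioc (0:ℝ) z.1, f j s z.2))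
            * (deriv (fun s => ξ j s z.2) z.1 - pd j (τ z.1) z.2) ∂(μST d) := by
  intro τ hτ ξ hξ
  classical
  obtain ⟨C, hC⟩ := hLinfL1
  obtain ⟨hτsm, hτper, a, halt, hτvan⟩ := hτ
  have hξsm : ∀ j, ContDiff ℝ (⊤:ℕ∞) (fun z : ℝ × (Fin d → ℝ) => ξ j z.1 z.2) :=
    fun j => (hξ j).1
  have hξper : ∀ j, ∀ t, ZPer (ξ j t) := fun j => (hξ j).2.1
  choose aξ haξ hξvan using fun j => (hξ j).2.2
  have hft_int : Integrable (fun z : ℝ × (Fin d → ℝ) => ft z.1 z.2) (μST d) :=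
    integrable_of_LinfL1 hft_meas (hC.mono fun t ht => ht.1)
  have hf_int : ∀ j, Integrable (fun z : ℝ × (Fin d → ℝ) => f j z.1 z.2) (μST d) :=
    fun j => integrable_of_LinfL1 (hf_meas j) (hC.mono fun t ht => ht.2 j)
  have hτc : Continuous (fun z : ℝ × (Fin d → ℝ) => τ z.1 z.2) := hτsm.continuous
  have hτtdiff : ∀ t, Differentiable ℝ (τ t) := fun t x =>
    (hasFDerivAt_slice_snd (hτsm.differentiable (by simp)) t x).differentiableAt
  have hDτc : ∀ j, Continuous (fun z : ℝ × (Fin d → ℝ) => pd j (τ z.1) z.2) :=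
    fun j => cont_pd_slice hτsm j
  have hξc : ∀ j, Continuous (fun z : ℝ × (Fin d → ℝ) => ξ j z.1 z.2) :=
    fun j => (hξsm j).continuous
  have hDξc : ∀ j, Continuous (fun z : ℝ × (Fin d → ℝ) => deriv (fun s => ξ j s z.2) z.1) :=
    fun j => cont_deriv_slice (hξsm j)
  obtain ⟨Mτ, hMτ0, hMτ⟩ := bound_of_periodic hτc hτper
  choose MDτ hMDτ0 hMDτ using fun j =>
    bound_of_periodic (hDτc j) (fun t => ZPer.pd_per (hτper t) (hτtdiff t) j)
  choose Mξ hMξ0 hMξ using fun j => bound_of_periodic (hξc j) (hξper j)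
  choose MDξ hMDξ0 hMDξ using fun j =>
    bound_of_periodic (hDξc j) (fun t => ZPer.deriv_per (hξper j) t)
  -- the auxiliary test function ζ
  set zeta : ℝ → (Fin d → ℝ) → ℝ :=
    fun t x => (∫ s in (0:ℝ)..1, τ s x) - ∫ s in (0:ℝ)..t, τ s x with hzeta
  have hτsl : ∀ x, Continuous (fun s => τ s x) := fun x =>
    hτc.comp (continuous_id.prodMk continuous_const)
  have zc : ∀ t x, zeta t x = ∫ s in t..(1:ℝ), τ s x := fun t x =>
    intervalIntegral.integral_interval_sub_left
      ((hτsl x).intervalIntegrable _ _) ((hτsl x).intervalIntegrable _ _)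
  have zsm : ContDiff ℝ (⊤:ℕ∞) (fun z : ℝ × (Fin d → ℝ) => zeta z.1 z.2) := by
    have hF : ContDiff ℝ (⊤:ℕ∞) (fun q : (Fin d → ℝ) × ℝ => τ q.2 q.1) :=
      hτsm.comp (contDiff_snd.prodMk contDiff_fst)
    have h1 : ContDiff ℝ (⊤:ℕ∞) (primI (fun q : (Fin d → ℝ) × ℝ => τ q.2 q.1)) :=
      contDiff_primI_top _ hF
    have h2 : ContDiff ℝ (⊤:ℕ∞) (fun z : ℝ × (Fin d → ℝ) =>
        primI (fun q : (Fin d → ℝ) × ℝ => τ q.2 q.1) (z.2, 1)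
        - primI (fun q : (Fin d → ℝ) × ℝ => τ q.2 q.1) (z.2, z.1)) :=
      (h1.comp (contDiff_snd.prodMk contDiff_const)).sub
        (h1.comp (contDiff_snd.prodMk contDiff_fst))
    exact h2
  have zper : ∀ t, ZPer (zeta t) := by
    intro t x k
    have h1 : ∀ s, τ s (x + fun i => ((k i : ℤ) : ℝ)) = τ s x := fun s => hτper s x k
    simp only [hzeta, h1]
  have zvan : ∀ t x, a ≤ t → zeta t x = 0 := by
    intro t x hat
    rw [zc]
    have h1 : Set.EqOn (fun s => τ s x) (fun _ => (0:ℝ)) (Set.uIcc t 1) := by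
      intro s hs
      refine hτvan s x ?_
      exact le_trans (le_min hat halt.le) hs.1
    rw [intervalIntegral.integral_congr h1]
    simp
  have ztest : IsTest zeta := ⟨zsm, zper, a, halt, zvan⟩
  have zderiv : ∀ t x, deriv (fun s => zeta s x) t = -(τ t x) := by
    intro t x
    have hD : HasDerivAt (fun u => ∫ s in (0:ℝ)..u, τ s x) (τ t x) t :=
      intervalIntegral.integral_hasDerivAt_right ((hτsl x).intervalIntegrable _ _)
        ((hτsl x).stronglyMeasurable.stronglyMeasurableAtFilter) ((hτsl x).continuousAt)
    have h2 : HasDerivAt (fun u => zeta u x) (0 - τ t x) t :=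
      (hasDerivAt_const t _).sub hD
    simpa using h2.deriv
  have zpd : ∀ t x (j : Fin d), pd j (zeta t) x = ∫ s in t..(1:ℝ), pd j (τ s) x := by
    intro t x j
    have h1 := hasFDerivAt_param_integral hτsm 0 1 x
    have h2 := hasFDerivAt_param_integral hτsm 0 t x
    have h3 := h1.sub h2
    have h4 : pd j (zeta t) x =
        ((∫ s in (0:ℝ)..1, (fderiv ℝ (fun z : ℝ × (Fin d → ℝ) => τ z.1 z.2) (s, x)).comp
            (ContinuousLinearMap.inr ℝ ℝ (Fin d → ℝ))) -
         (∫ s in (0:ℝ)..t, (fderiv ℝ (fun z : ℝ × (Fin d → ℝ) => τ z.1 z.2) (s, x)).comp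
            (ContinuousLinearMap.inr ℝ ℝ (Fin d → ℝ)))) (Pi.single j 1) := by
      rw [pd]
      congr 1
      exact h3.fderiv
    rw [h4]
    rw [ContinuousLinearMap.sub_apply,
      ContinuousLinearMap.intervalIntegral_apply (intervalIntegrable_G hτsm 0 1 x),
      ContinuousLinearMap.intervalIntegral_apply (intervalIntegrable_G hτsm 0 t x)]
    have h5 : ∀ s : ℝ, ((fderiv ℝ (fun z : ℝ × (Fin d → ℝ) => τ z.1 z.2) (s, x)).comp
        (ContinuousLinearMap.inr ℝ ℝ (Fin d → ℝ))) (Pi.single j 1) = pd j (τ s) x := by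
      intro s
      rw [pd_slice hτsm]
      simp
    simp only [h5]
    refine intervalIntegral.integral_interval_sub_left ?_ ?_ <;>
      exact ((hDτc j).comp (continuous_id.prodMk continuous_const)).intervalIntegrable _ _
  -- apply the null boundary condition to ζ
  have heqnull : ∀ᵐ z ∂(μST d),
      (ft z.1 z.2 * deriv (fun s => zeta s z.2) z.1
        + ∑ j, f j z.1 z.2 * pd j (zeta z.1) z.2)
      = (-(ft z.1 z.2 * τ z.1 z.2)
        + ∑ j, f j z.1 z.2 * (∫ s in Set.Ioc z.1 (1:ℝ), pd j (τ s) z.2)) := by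
    filter_upwards [ae_fst_Ioo (d := d)] with z hz
    rw [zderiv z.1 z.2, mul_neg]
    congr 1
    refine Finset.sum_congr rfl fun j _ => ?_
    rw [zpd z.1 z.2 j, intervalIntegral.integral_of_le hz.2.le]
  have znull : ∫ z, (-(ft z.1 z.2 * τ z.1 z.2)
      + ∑ j, f j z.1 z.2 * (∫ s in Set.Ioc z.1 (1:ℝ), pd j (τ s) z.2)) ∂(μST d) = 0 := by
    rw [← integral_congr_ae heqnull]
    exact hnull zeta ztest
  -- integrability of all the pieces
  have hIτ : Integrable (fun z : ℝ × (Fin d → ℝ) => ft z.1 z.2 * τ z.1 z.2) (μST d) :=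
    integrable_mul_bdd (h := fun t x => τ t x) hft_int hτc.aestronglyMeasurable hMτ
  have hIξ : ∀ j, Integrable (fun z : ℝ × (Fin d → ℝ) =>
      f j z.1 z.2 * ξ j z.1 z.2) (μST d) :=
    fun j => integrable_mul_bdd (h := fun t x => ξ j t x) (hf_int j) (hξc j).aestronglyMeasurable (hMξ j)
  have hIη : ∀ j, Integrable (fun z : ℝ × (Fin d → ℝ) =>
      f j z.1 z.2 * (∫ s in Set.Ioc z.1 (1:ℝ), pd j (τ s) z.2)) (μST d) :=
    fun j => integrable_mul_bdd (h := fun t x => ∫ s in Set.Ioc t (1:ℝ), pd j (τ s) x)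
      (hf_int j) (aesm_K (h := fun t x => pd j (τ t) x) (hDτc j))
      (bound_K (h := fun t x => pd j (τ t) x) (hMDτ j))
  have hIGξ : ∀ j, Integrable (fun z : ℝ × (Fin d → ℝ) =>
      (∫ s in Set.Ioc (0:ℝ) z.1, f j s z.2) * deriv (fun s => ξ j s z.2) z.1) (μST d) :=
    fun j => integrable_prim_mul (h := fun t x => deriv (fun s => ξ j s x) t) (hf_int j) (hDξc j).aestronglyMeasurable (hMDξ j)
  have hIGτ : ∀ j, Integrable (fun z : ℝ × (Fin d → ℝ) =>
      (∫ s in Set.Ioc (0:ℝ) z.1, f j s z.2) * pd j (τ z.1) z.2) (μST d) :=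
    fun j => integrable_prim_mul (h := fun t x => pd j (τ t) x) (hf_int j) (hDτc j).aestronglyMeasurable (hMDτ j)
  have hIτneg : Integrable (fun z : ℝ × (Fin d → ℝ) => -(ft z.1 z.2 * τ z.1 z.2)) (μST d) :=
    hIτ.neg
  have hIGξneg : ∀ j, Integrable (fun z : ℝ × (Fin d → ℝ) =>
      -((∫ s in Set.Ioc (0:ℝ) z.1, f j s z.2) * deriv (fun s => ξ j s z.2) z.1)) (μST d) :=
    fun j => (hIGξ j).neg
  -- the key identity from the null condition
  have hkey : ∑ j, (∫ z, f j z.1 z.2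
        * (∫ s in Set.Ioc z.1 (1:ℝ), pd j (τ s) z.2) ∂(μST d))
      = ∫ z, ft z.1 z.2 * τ z.1 z.2 ∂(μST d) := by
    have h1 : ∫ z, (-(ft z.1 z.2 * τ z.1 z.2)
        + ∑ j, f j z.1 z.2 * (∫ s in Set.Ioc z.1 (1:ℝ), pd j (τ s) z.2)) ∂(μST d)
        = -(∫ z, ft z.1 z.2 * τ z.1 z.2 ∂(μST d))
          + ∑ j, (∫ z, f j z.1 z.2
            * (∫ s in Set.Ioc z.1 (1:ℝ), pd j (τ s) z.2) ∂(μST d)) := by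
      rw [MeasureTheory.integral_add hIτneg
        (integrable_finset_sum _ fun j _ => hIη j), MeasureTheory.integral_neg,
        MeasureTheory.integral_finset_sum _ fun j _ => hIη j]
    rw [h1] at znull
    linarith
  -- swaps
  have hswapτ : ∀ j, ∫ z, (∫ s in Set.Ioc (0:ℝ) z.1, f j s z.2)
        * pd j (τ z.1) z.2 ∂(μST d)
      = ∫ z, f j z.1 z.2 * (∫ s in Set.Ioc z.1 (1:ℝ), pd j (τ s) z.2) ∂(μST d) :=
    fun j => swap_lemma (h := fun t x => pd j (τ t) x) (hf_int j) (hDτc j) (hMDτ j)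
  have hswapξ : ∀ j, ∫ z, (∫ s in Set.Ioc (0:ℝ) z.1, f j s z.2)
        * deriv (fun s => ξ j s z.2) z.1 ∂(μST d)
      = ∫ z, f j z.1 z.2
        * (∫ s in Set.Ioc z.1 (1:ℝ), deriv (fun s => ξ j s z.2) s) ∂(μST d) :=
    fun j => swap_lemma (h := fun t x => deriv (fun s => ξ j s x) t) (hf_int j) (hDξc j) (hMDξ j)
  -- compute the inner integral of the time derivative
  have hFTC : ∀ j, ∀ᵐ z ∂(μST d),
      f j z.1 z.2 * (∫ s in Set.Ioc z.1 (1:ℝ), deriv (fun s => ξ j s z.2) s)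
      = -(f j z.1 z.2 * ξ j z.1 z.2) := by
    intro j
    filter_upwards [ae_fst_Ioo (d := d)] with z hz
    have hdiff : ∀ s ∈ Set.uIcc z.1 (1:ℝ), DifferentiableAt ℝ (fun s => ξ j s z.2) s :=
      fun s _ => (hasDerivAt_slice_fst
        ((hξsm j).differentiable (by simp)) s z.2).differentiableAt
    have hcont : ContinuousOn (fun s => deriv (fun s' => ξ j s' z.2) s)
        (Set.uIcc z.1 (1:ℝ)) :=
      ((hDξc j).comp (continuous_id.prodMk continuous_const)).continuousOn
    have h2 : ∫ s in z.1..(1:ℝ), deriv (fun s' => ξ j s' z.2) s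
        = ξ j 1 z.2 - ξ j z.1 z.2 :=
      intervalIntegral.integral_deriv_eq_sub' _ rfl hdiff hcont
    rw [← intervalIntegral.integral_of_le hz.2.le, h2, hξvan j 1 z.2 (haξ j).le]
    ring
  have hGξ : ∀ j, ∫ z, (∫ s in Set.Ioc (0:ℝ) z.1, f j s z.2)
        * deriv (fun s => ξ j s z.2) z.1 ∂(μST d)
      = -(∫ z, f j z.1 z.2 * ξ j z.1 z.2 ∂(μST d)) := by
    intro j
    rw [hswapξ j, integral_congr_ae (hFTC j), MeasureTheory.integral_neg]
  -- put everything together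
  have hterm : ∀ j, (fun z : ℝ × (Fin d → ℝ) =>
      (-(∫ s in Set.Ioc (0:ℝ) z.1, f j s z.2))
        * (deriv (fun s => ξ j s z.2) z.1 - pd j (τ z.1) z.2))
      = fun z => -((∫ s in Set.Ioc (0:ℝ) z.1, f j s z.2) * deriv (fun s => ξ j s z.2) z.1)
          + (∫ s in Set.Ioc (0:ℝ) z.1, f j s z.2) * pd j (τ z.1) z.2 :=
    fun j => funext fun z => by ring
  have hItermj : ∀ j, Integrable (fun z : ℝ × (Fin d → ℝ) =>
      (-(∫ s in Set.Ioc (0:ℝ) z.1, f j s z.2))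
        * (deriv (fun s => ξ j s z.2) z.1 - pd j (τ z.1) z.2)) (μST d) := by
    intro j
    rw [hterm j]
    exact (hIGξneg j).add (hIGτ j)
  have hRHS : ∫ z, ∑ j, (-(∫ s in Set.Ioc (0:ℝ) z.1, f j s z.2))
        * (deriv (fun s => ξ j s z.2) z.1 - pd j (τ z.1) z.2) ∂(μST d)
      = ∑ j, (-(∫ z, (∫ s in Set.Ioc (0:ℝ) z.1, f j s z.2)
            * deriv (fun s => ξ j s z.2) z.1 ∂(μST d))
          + ∫ z, (∫ s in Set.Ioc (0:ℝ) z.1, f j s z.2) * pd j (τ z.1) z.2 ∂(μST d)) := by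
    rw [MeasureTheory.integral_finset_sum _ fun j _ => hItermj j]
    refine Finset.sum_congr rfl fun j _ => ?_
    rw [hterm j, MeasureTheory.integral_add (hIGξneg j) (hIGτ j),
      MeasureTheory.integral_neg]
  have hLHS : ∫ z, (ft z.1 z.2 * τ z.1 z.2 + ∑ j, f j z.1 z.2 * ξ j z.1 z.2) ∂(μST d)
      = (∫ z, ft z.1 z.2 * τ z.1 z.2 ∂(μST d))
        + ∑ j, ∫ z, f j z.1 z.2 * ξ j z.1 z.2 ∂(μST d) := by
    rw [MeasureTheory.integral_add hIτ (integrable_finset_sum _ fun j _ => hIξ j),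
      MeasureTheory.integral_finset_sum _ fun j _ => hIξ j]
  rw [hLHS, hRHS]
  have hsum : ∀ j, (-(∫ z, (∫ s in Set.Ioc (0:ℝ) z.1, f j s z.2)
            * deriv (fun s => ξ j s z.2) z.1 ∂(μST d))
          + ∫ z, (∫ s in Set.Ioc (0:ℝ) z.1, f j s z.2) * pd j (τ z.1) z.2 ∂(μST d))
      = (∫ z, f j z.1 z.2 * ξ j z.1 z.2 ∂(μST d))
        + ∫ z, f j z.1 z.2 * (∫ s in Set.Ioc z.1 (1:ℝ), pd j (τ s) z.2) ∂(μST d) := by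
    intro j
    rw [hGξ j, hswapτ j, neg_neg]
  rw [Finset.sum_congr rfl fun j _ => hsum j, Finset.sum_add_distrib, hkey]
  ring

end
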